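/- Any edge-weighted graph can be transformed into a flooding graph by keeping only the edges that are a lowest edge of one of their extremities: let G' be the subgraph of G whose edges are the adjacent pairs (i, j) with e i j = (ε_ne e) i or e i j = (ε_ne e) j. Then every vertex of G is incident to at least one edge of G'; for every vertex i, the minimum of e i j over the G'-neighbors j of i equals (ε_ne e) i computed in G; and, setting n = ε_ne e, the pair (n, e) is a flooding graph on G'. -/

import Mathlib

/-!
Every vertex keeps one of its lowest edges in `G'`, so its erosion computed in `G'` is the one
computed in `G`. An edge `(i, j)` of `G'` weighs at least the erosion at both ends and exactly
the erosion at one of them, hence it weighs their maximum.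
-/

/-- The erosion from edge weights to node weights:
`(ε_ne e) i` is the minimum of `e i j` over the neighbors `j` of `i`. -/
noncomputable def epsNE {V : Type*} [Fintype V] (G : SimpleGraph V) [DecidableRel G.Adj]
    (h : ∀ i : V, ∃ j, G.Adj i j) (e : V → V → ℝ) (i : V) : ℝ :=
  (G.neighborFinset i).inf'
    ⟨(h i).choose, by rw [SimpleGraph.mem_neighborFinset]; exact (h i).choose_spec⟩
    (fun j => e i j)

section Erosion

variable {V : Type*} [Fintype V] (G : SimpleGraph V) [DecidableRel G.Adj]
  (h : ∀ i : V, ∃ j, G.Adj i j) (e : V → V → ℝ)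

lemma epsNE_le_of_adj {i j : V} (hij : G.Adj i j) : epsNE G h e i ≤ e i j :=
  Finset.inf'_le _ (by rwa [SimpleGraph.mem_neighborFinset])

lemma exists_adj_eq_epsNE (i : V) : ∃ j, G.Adj i j ∧ e i j = epsNE G h e i := by
  obtain ⟨j, hj, hje⟩ := Finset.exists_mem_eq_inf' (f := fun j => e i j)
    ⟨(h i).choose, (G.mem_neighborFinset i _).2 (h i).choose_spec⟩
  exact ⟨j, (G.mem_neighborFinset i j).1 hj, hje.symm⟩

lemma isLeast_epsNE_of_le {G' : SimpleGraph V} (hle : G' ≤ G) {i : V}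
    (hlow : ∃ j, G'.Adj i j ∧ e i j = epsNE G h e i) :
    IsLeast {w : ℝ | ∃ j, G'.Adj i j ∧ w = e i j} (epsNE G h e i) := by
  obtain ⟨j, hj, hje⟩ := hlow
  refine ⟨⟨j, hj, hje.symm⟩, ?_⟩
  rintro w ⟨k, hk, rfl⟩
  exact epsNE_le_of_adj G h e (hle hk)

lemma eq_max_epsNE_of_lowest {i j : V} (hij : G.Adj i j) (hsymm : e i j = e j i)
    (hlow : e i j = epsNE G h e i ∨ e i j = epsNE G h e j) :
    e i j = max (epsNE G h e i) (epsNE G h e j) := by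
  have hi : epsNE G h e i ≤ e i j := epsNE_le_of_adj G h e hij
  have hj : epsNE G h e j ≤ e i j := hsymm ▸ epsNE_le_of_adj G h e hij.symm
  rcases hlow with hlow | hlow
  · rw [hlow] at hj ⊢; exact (max_eq_left hj).symm
  · rw [hlow] at hi ⊢; exact (max_eq_right hi).symm

end Erosion

/-- Keeping only the edges that are a lowest edge of one of their extremities turns an
edge-weighted graph into a flooding graph: every vertex keeps at least one incident
edge, the minimum edge weight at each vertex computed in the pruned graph `G'` equals
`(ε_ne e)` computed in `G`, and with `n = ε_ne e` the pair `(n, e)` is a flooding graph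
on `G'` (the minimum being expressed via `IsLeast`). -/
theorem pruned_graph_is_flooding {V : Type*} [Fintype V] (G : SimpleGraph V)
    [DecidableRel G.Adj] (h : ∀ i : V, ∃ j, G.Adj i j)
    (e : V → V → ℝ) (hsymm : ∀ i j, G.Adj i j → e i j = e j i)
    (G' : SimpleGraph V)
    (hG' : ∀ i j, G'.Adj i j ↔
      G.Adj i j ∧ (e i j = epsNE G h e i ∨ e i j = epsNE G h e j)) :
    (∀ i : V, ∃ j, G'.Adj i j) ∧
    (∀ i : V, IsLeast {w : ℝ | ∃ j, G'.Adj i j ∧ w = e i j} (epsNE G h e i)) ∧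
    (∀ i j, G'.Adj i j → e i j = max (epsNE G h e i) (epsNE G h e j)) := by
  have hle : G' ≤ G := fun i j hij => ((hG' i j).1 hij).1
  have hlow (i : V) : ∃ j, G'.Adj i j ∧ e i j = epsNE G h e i := by
    obtain ⟨j, hij, hje⟩ := exists_adj_eq_epsNE G h e i
    exact ⟨j, (hG' i j).2 ⟨hij, Or.inl hje⟩, hje⟩
  refine ⟨fun i => (hlow i).imp fun _ => And.left,
    fun i => isLeast_epsNE_of_le G h e hle (hlow i), fun i j hij => ?_⟩
  obtain ⟨hadj, hlowest⟩ := (hG' i j).1 hij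
  exact eq_max_epsNE_of_lowest G h e hadj (hsymm i j hadj) hlowest
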